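/- arXiv:2112.13101 — 3 statements merged into one kernel-verified Lean document; each statement's English description precedes it below -/
import Mathlib

section
/- Let $r:(0,1]\to[0,\infty)$ be a non-negative, non-decreasing function such that $r_{\lambda t}\le \sqrt{\lambda}\, r_t$ for all $\lambda\in(0,1]$ and $t\in(0,1]$. Then for all $t\in(0,1]$, $\varepsilon>0$ and $k\in\mathbb{N}$, $\int_0^t (t-s)^{-1} r_{t-s}^{\varepsilon}\, s^{-1} r_s^{k\varepsilon}\,ds \le B(\varepsilon/2,(k\varepsilon)/2)\, t^{-1} r_t^{(k+1)\varepsilon}$, where $B$ denotes the Beta function. -/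
open MeasureTheory Set

/-- The Euler Beta function `B(a,b) = ∫₀¹ u^(a-1) (1-u)^(b-1) du`. -/
noncomputable def Beta (a b : ℝ) : ℝ := ∫ u in (0:ℝ)..1, u ^ (a - 1) * (1 - u) ^ (b - 1)

/-!
Scaling `r x ≤ √(x/t) r t` for `x ≤ t` bounds `x⁻¹ r x ^ c` by `x ^ (c/2 - 1) t^(-c/2) r t ^ c`.
Applied to both factors, this bounds the integrand by a multiple of the Beta kernel
`s ^ (a-1) (t-s) ^ (b-1)`, whose integral over `(0,t)` is `t ^ (a+b-1) B(a,b)`.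
-/

lemma Beta_comm (a b : ℝ) : Beta a b = Beta b a := by
  have h := intervalIntegral.integral_comp_sub_left
    (fun u : ℝ => u ^ (b - 1) * (1 - u) ^ (a - 1)) (a := 0) (b := 1) 1
  simp only [sub_zero, sub_self, sub_sub_cancel] at h
  rw [Beta, Beta, ← h]
  exact intervalIntegral.integral_congr fun _ _ => mul_comm _ _

lemma intervalIntegrable_rpow_mul_rpow_sub {a b t : ℝ} (ha : 0 < a) (hb : 0 < b) (ht : 0 < t) :
    IntervalIntegrable (fun s => s ^ (a - 1) * (t - s) ^ (b - 1)) volume 0 t := by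
  have hleft : IntervalIntegrable (fun s => s ^ (a - 1) * (t - s) ^ (b - 1)) volume 0 (t / 2) := by
    refine (intervalIntegral.intervalIntegrable_rpow' (by linarith)).mul_continuousOn ?_
    refine ContinuousOn.rpow_const (by fun_prop) fun x hx => Or.inl ?_
    rw [uIcc_of_le (by linarith)] at hx
    linarith [hx.2]
  have hright : IntervalIntegrable (fun s => s ^ (a - 1) * (t - s) ^ (b - 1)) volume (t / 2) t := by
    refine IntervalIntegrable.continuousOn_mul ?_ ?_
    · have h := ((intervalIntegral.intervalIntegrable_rpow' (r := b - 1) (by linarith)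
        (a := 0) (b := t / 2)).comp_sub_left t).symm
      rwa [sub_zero, show t - t / 2 = t / 2 by ring] at h
    · refine ContinuousOn.rpow_const (by fun_prop) fun x hx => Or.inl ?_
      rw [uIcc_of_le (by linarith)] at hx
      linarith [hx.1]
  exact hleft.trans hright

lemma integral_rpow_mul_rpow_sub {a b t : ℝ} (ht : 0 < t) :
    ∫ s in (0:ℝ)..t, s ^ (a - 1) * (t - s) ^ (b - 1) = t ^ (a + b - 1) * Beta a b := by
  have hsubst := intervalIntegral.integral_comp_mul_left
    (fun s => s ^ (a - 1) * (t - s) ^ (b - 1)) (a := 0) (b := 1) ht.ne'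
  rw [mul_zero, mul_one, smul_eq_mul, eq_inv_mul_iff_mul_eq₀ ht.ne'] at hsubst
  have hscaled : ∫ u in (0:ℝ)..1, (t * u) ^ (a - 1) * (t - t * u) ^ (b - 1)
      = t ^ (a - 1) * t ^ (b - 1) * Beta a b := by
    rw [Beta, ← intervalIntegral.integral_const_mul]
    refine intervalIntegral.integral_congr fun u hu => ?_
    rw [uIcc_of_le zero_le_one] at hu
    rw [show t - t * u = t * (1 - u) by ring, Real.mul_rpow ht.le hu.1,
      Real.mul_rpow ht.le (by linarith [hu.2])]
    ring
  rw [← hsubst, hscaled, show a + b - 1 = (a - 1) + (b - 1) + 1 by ring, Real.rpow_add ht,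
    Real.rpow_add ht, Real.rpow_one]
  ring

lemma inv_mul_rpow_le_of_scaling {r : ℝ → ℝ}
    (hr_nonneg : ∀ t ∈ Ioc (0:ℝ) 1, 0 ≤ r t)
    (hr_scale : ∀ l ∈ Ioc (0:ℝ) 1, ∀ t ∈ Ioc (0:ℝ) 1, r (l * t) ≤ Real.sqrt l * r t)
    {t : ℝ} (ht : t ∈ Ioc (0:ℝ) 1) {c : ℝ} (hc : 0 ≤ c) {x : ℝ} (hx : 0 < x) (hxt : x ≤ t) :
    x⁻¹ * r x ^ c ≤ x ^ (c / 2 - 1) * (t ^ (-(c / 2)) * r t ^ c) := by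
  have ht0 : 0 < t := ht.1
  have hscale : r x ≤ Real.sqrt (x / t) * r t := by
    simpa [div_mul_cancel₀ x ht0.ne'] using
      hr_scale (x / t) ⟨div_pos hx ht0, (div_le_one ht0).2 hxt⟩ t ht
  have hpow : (Real.sqrt (x / t) * r t) ^ c = x ^ (c / 2) * t ^ (-(c / 2)) * r t ^ c := by
    rw [Real.mul_rpow (Real.sqrt_nonneg _) (hr_nonneg t ht), Real.sqrt_eq_rpow,
      ← Real.rpow_mul (div_nonneg hx.le ht0.le), one_div_mul_eq_div,
      Real.div_rpow hx.le ht0.le, Real.rpow_neg ht0.le, div_eq_mul_inv]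
  calc x⁻¹ * r x ^ c ≤ x⁻¹ * (x ^ (c / 2) * t ^ (-(c / 2)) * r t ^ c) := by
        rw [← hpow]
        gcongr
        · exact hr_nonneg x ⟨hx, hxt.trans ht.2⟩
    _ = x ^ (c / 2 - 1) * (t ^ (-(c / 2)) * r t ^ c) := by
        rw [Real.rpow_sub hx, Real.rpow_one, div_eq_mul_inv]
        ring

lemma convolution_integrand_le_of_scaling {r : ℝ → ℝ}
    (hr_nonneg : ∀ t ∈ Ioc (0:ℝ) 1, 0 ≤ r t)
    (hr_scale : ∀ l ∈ Ioc (0:ℝ) 1, ∀ t ∈ Ioc (0:ℝ) 1, r (l * t) ≤ Real.sqrt l * r t)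
    {t : ℝ} (ht : t ∈ Ioc (0:ℝ) 1) {c d : ℝ} (hc : 0 ≤ c) (hd : 0 ≤ d) {s : ℝ}
    (hs : s ∈ Ioo 0 t) :
    (t - s)⁻¹ * r (t - s) ^ c * (s⁻¹ * r s ^ d)
      ≤ s ^ (d / 2 - 1) * (t - s) ^ (c / 2 - 1) * (t ^ (-((c + d) / 2)) * r t ^ (c + d)) := by
  have hts : 0 < t - s := by linarith [hs.2]
  have hrt := hr_nonneg t ht
  calc (t - s)⁻¹ * r (t - s) ^ c * (s⁻¹ * r s ^ d)
      ≤ (t - s) ^ (c / 2 - 1) * (t ^ (-(c / 2)) * r t ^ c)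
          * (s ^ (d / 2 - 1) * (t ^ (-(d / 2)) * r t ^ d)) := by
        refine mul_le_mul
          (inv_mul_rpow_le_of_scaling hr_nonneg hr_scale ht hc hts (by linarith [hs.1]))
          (inv_mul_rpow_le_of_scaling hr_nonneg hr_scale ht hd hs.1 hs.2.le) ?_
          (mul_nonneg (Real.rpow_nonneg hts.le _)
            (mul_nonneg (Real.rpow_nonneg ht.1.le _) (Real.rpow_nonneg hrt _)))
        exact mul_nonneg (inv_nonneg.2 hs.1.le)
          (Real.rpow_nonneg (hr_nonneg s ⟨hs.1, hs.2.le.trans ht.2⟩) _)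
    _ = s ^ (d / 2 - 1) * (t - s) ^ (c / 2 - 1) * (t ^ (-((c + d) / 2)) * r t ^ (c + d)) := by
        rw [Real.rpow_add_of_nonneg hrt hc hd,
          show -((c + d) / 2) = -(c / 2) + -(d / 2) by ring, Real.rpow_add ht.1]
        ring

theorem integral_convolution_le_Beta_of_scaling {r : ℝ → ℝ}
    (hr_nonneg : ∀ t ∈ Ioc (0:ℝ) 1, 0 ≤ r t)
    (hr_scale : ∀ l ∈ Ioc (0:ℝ) 1, ∀ t ∈ Ioc (0:ℝ) 1, r (l * t) ≤ Real.sqrt l * r t)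
    {t : ℝ} (ht : t ∈ Ioc (0:ℝ) 1) {c d : ℝ} (hc : 0 < c) (hd : 0 < d) :
    ∫ s in Ioo (0:ℝ) t, (t - s)⁻¹ * r (t - s) ^ c * (s⁻¹ * r s ^ d)
      ≤ Beta (c / 2) (d / 2) * (t⁻¹ * r t ^ (c + d)) := by
  have ht0 : 0 < t := ht.1
  set C := t ^ (-((c + d) / 2)) * r t ^ (c + d)
  have hkernel : IntegrableOn (fun s => s ^ (d / 2 - 1) * (t - s) ^ (c / 2 - 1) * C)
      (Ioo 0 t) := by
    rw [← intervalIntegrable_iff_integrableOn_Ioo_of_le ht0.le]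
    exact (intervalIntegrable_rpow_mul_rpow_sub (by positivity) (by positivity) ht0).mul_const C
  have hnonneg : ∀ s ∈ Ioo 0 t, 0 ≤ (t - s)⁻¹ * r (t - s) ^ c * (s⁻¹ * r s ^ d) := by
    intro s hs
    have hrs := hr_nonneg s ⟨hs.1, hs.2.le.trans ht.2⟩
    have hrts := hr_nonneg (t - s) ⟨by linarith [hs.2], by linarith [hs.1, ht.2]⟩
    have hts : 0 ≤ t - s := by linarith [hs.2]
    have hs0 := hs.1.le
    positivity
  calc ∫ s in Ioo (0:ℝ) t, (t - s)⁻¹ * r (t - s) ^ c * (s⁻¹ * r s ^ d)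
      ≤ ∫ s in Ioo (0:ℝ) t, s ^ (d / 2 - 1) * (t - s) ^ (c / 2 - 1) * C :=
        integral_mono_of_nonneg (ae_restrict_of_forall_mem measurableSet_Ioo hnonneg) hkernel
          (ae_restrict_of_forall_mem measurableSet_Ioo fun s hs =>
            convolution_integrand_le_of_scaling hr_nonneg hr_scale ht hc.le hd.le hs)
    _ = t ^ (d / 2 + c / 2 - 1) * Beta (d / 2) (c / 2) * C := by
        rw [← integral_Ioc_eq_integral_Ioo, ← intervalIntegral.integral_of_le ht0.le,
          intervalIntegral.integral_mul_const, integral_rpow_mul_rpow_sub ht0]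
    _ = Beta (c / 2) (d / 2) * (t⁻¹ * r t ^ (c + d)) := by
        rw [Beta_comm, ← Real.rpow_neg_one, show (-1 : ℝ) = (d / 2 + c / 2 - 1) + -((c + d) / 2)
          by ring, Real.rpow_add ht0]
        ring

theorem stmt0_general (r : ℝ → ℝ)
    (hr_nonneg : ∀ t ∈ Ioc (0:ℝ) 1, 0 ≤ r t)
    (hr_scale : ∀ l ∈ Ioc (0:ℝ) 1, ∀ t ∈ Ioc (0:ℝ) 1, r (l * t) ≤ Real.sqrt l * r t)
    (t : ℝ) (ht : t ∈ Ioc (0:ℝ) 1) (ε : ℝ) (hε : 0 < ε) (k : ℕ) (hk : 1 ≤ k) :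
    ∫ s in Ioo (0:ℝ) t, (t - s)⁻¹ * r (t - s) ^ ε * (s⁻¹ * r s ^ ((k : ℝ) * ε))
      ≤ Beta (ε / 2) ((k : ℝ) * ε / 2) * (t⁻¹ * r t ^ (((k : ℝ) + 1) * ε)) := by
  have hkε : 0 < (k : ℝ) * ε := mul_pos (by exact_mod_cast hk) hε
  rw [show ((k : ℝ) + 1) * ε = ε + (k : ℝ) * ε by ring]
  exact integral_convolution_le_Beta_of_scaling hr_nonneg hr_scale ht hε hkε

/-- If `r : (0,1] → [0,∞)` is non-negative, non-decreasing and satisfies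
`r (λ t) ≤ √λ · r t`, then for all `t ∈ (0,1]`, `ε > 0` and `k ∈ ℕ`,
`∫₀ᵗ (t-s)⁻¹ r_{t-s}^ε s⁻¹ r_s^{kε} ds ≤ B(ε/2, kε/2) t⁻¹ r_t^{(k+1)ε}`. -/
theorem stmt0 (r : ℝ → ℝ)
    (hr_nonneg : ∀ t ∈ Ioc (0:ℝ) 1, 0 ≤ r t)
    (hr_mono : ∀ s ∈ Ioc (0:ℝ) 1, ∀ t ∈ Ioc (0:ℝ) 1, s ≤ t → r s ≤ r t)
    (hr_scale : ∀ l ∈ Ioc (0:ℝ) 1, ∀ t ∈ Ioc (0:ℝ) 1, r (l * t) ≤ Real.sqrt l * r t)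
    (t : ℝ) (ht : t ∈ Ioc (0:ℝ) 1) (ε : ℝ) (hε : 0 < ε) (k : ℕ) (hk : 1 ≤ k) :
    ∫ s in Ioo (0:ℝ) t, (t - s)⁻¹ * r (t - s) ^ ε * (s⁻¹ * r s ^ ((k : ℝ) * ε))
      ≤ Beta (ε / 2) ((k : ℝ) * ε / 2) * (t⁻¹ * r t ^ (((k : ℝ) + 1) * ε)) :=
  stmt0_general r hr_nonneg hr_scale t ht ε hε k hk
end

section
/- Let $d\in\mathbb{N}$ and let $\nu:[0,\infty)\to[0,\infty]$ be non-increasing with $\int_{\mathbb{R}^d}(1\wedge|x|^2)\nu(|x|)\,dx<\infty$. Define $h(r)=\int_{\mathbb{R}^d}(1\wedge |x|^2/r^2)\nu(|x|)\,dx$. Suppose there exist $\alpha_h\in(0,1)$ and $C_h\ge 1$ such that $h(r)\le C_h\lambda^{\alpha_h}h(\lambda r)$ for all $\lambda,r\in(0,1]$. Then for all $r\in(0,1]$, $\int_{r\le|z|<1}|z|\,\nu(|z|)\,dz \le \frac{2C_h}{1-\alpha_h}\, r^{\alpha_h} h(r)$. -/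
open MeasureTheory Set
open scoped ENNReal

/-! By the layer-cake formula, the integral of `|z| ν(|z|)` over the annulus `A = {r ≤ |z| < 1}`
is `∫₀¹ ∫_{A ∩ {|z| > t}} ν(|z|) dz dt`. The tail `∫_{|z| ≥ s} ν(|z|) dz` is at most `h(s)`, since
the weight `1 ∧ |z|²/s²` is `1` there, and weak scaling with `λ = r/s` gives
`h(s) ≤ C_h r^{α_h} h(r) s^{-α_h}` for `r ≤ s ≤ 1`. Taking `s = max t r` bounds the layer at height
`t` by `C_h r^{α_h} h(r) t^{-α_h}`, which integrates over `(0,1)` to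
`C_h r^{α_h} h(r) / (1 - α_h)`. -/

theorem lintegral_mul_ofReal_eq_lintegral_setLIntegral_lt {α : Type*} [MeasurableSpace α]
    (μ : Measure α) {f : α → ℝ} {w : α → ℝ≥0∞} (hf₀ : 0 ≤ f) (hf : Measurable f)
    (hw : Measurable w) :
    ∫⁻ x, w x * ENNReal.ofReal (f x) ∂μ = ∫⁻ t in Ioi 0, ∫⁻ x in {x | t < f x}, w x ∂μ := by
  calc ∫⁻ x, w x * ENNReal.ofReal (f x) ∂μ = ∫⁻ x, ENNReal.ofReal (f x) ∂μ.withDensity w :=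
        (lintegral_withDensity_eq_lintegral_mul μ hw hf.ennreal_ofReal).symm
    _ = ∫⁻ t in Ioi 0, μ.withDensity w {x | t < f x} :=
        lintegral_eq_lintegral_meas_lt _ (ae_of_all _ hf₀) hf.aemeasurable
    _ = _ := lintegral_congr fun t ↦ withDensity_apply w (measurableSet_lt measurable_const hf)

theorem lintegral_Ioo_zero_one_rpow_neg {α : ℝ} (hα : α < 1) :
    ∫⁻ t in Ioo 0 1, ENNReal.ofReal (t ^ (-α)) = ENNReal.ofReal (1 / (1 - α)) := by
  have hint : IntegrableOn (fun t : ℝ ↦ t ^ (-α)) (Ioo 0 1) :=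
    (intervalIntegral.integrableOn_Ioo_rpow_iff zero_lt_one).2 (by linarith)
  rw [← ofReal_integral_eq_lintegral_ofReal hint, ← integral_Ioc_eq_integral_Ioo,
    ← intervalIntegral.integral_of_le zero_le_one, integral_rpow (.inl (by linarith))]
  · rw [show -α + 1 = 1 - α by ring, Real.one_rpow, Real.zero_rpow (by linarith), sub_zero]
  · filter_upwards [ae_restrict_mem measurableSet_Ioo] with t ht
    exact Real.rpow_nonneg ht.1.le _

theorem AntitoneOn.measurable_comp_norm {E : Type*} [NormedAddCommGroup E] [MeasurableSpace E]
    [OpensMeasurableSpace E] {ν : ℝ → ℝ} (hν : AntitoneOn ν (Ici 0)) :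
    Measurable fun x : E ↦ ν ‖x‖ := by
  have hanti : Antitone fun s ↦ ν (max s 0) := fun a b hab ↦
    hν (le_max_right a 0) (le_max_right b 0) (max_le_max_right 0 hab)
  simpa [Function.comp_def] using
    hanti.measurable.comp (measurable_norm : Measurable fun x : E ↦ ‖x‖)

theorem min_one_mul_le_max_mul_min_one {c a : ℝ} (ha : 0 ≤ a) :
    min 1 (c * a) ≤ max 1 c * min 1 a := by
  rw [mul_min_of_nonneg _ _ (zero_le_one.trans (le_max_left 1 c)), mul_one]
  exact min_le_min (le_max_left 1 c) (mul_le_mul_of_nonneg_right (le_max_right 1 c) ha)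

section

variable {E : Type*} [NormedAddCommGroup E] [MeasurableSpace E] [OpensMeasurableSpace E]
  {μ : Measure E} {g : E → ℝ}

theorem MeasureTheory.Integrable.min_one_sq_div_sq_mul (hg : AEStronglyMeasurable g μ)
    (hint : Integrable (fun x ↦ min 1 (‖x‖ ^ 2) * g x) μ) (ρ : ℝ) :
    Integrable (fun x ↦ min 1 (‖x‖ ^ 2 / ρ ^ 2) * g x) μ := by
  refine (hint.norm.const_mul (max 1 (ρ ^ 2)⁻¹)).mono' ?_ (ae_of_all _ fun x ↦ ?_)
  · exact ((continuous_const.min ((continuous_norm.pow 2).div_const _)).aestronglyMeasurable).mul hg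
  · have hle := min_one_mul_le_max_mul_min_one (c := (ρ ^ 2)⁻¹) (sq_nonneg ‖x‖)
    rw [inv_mul_eq_div] at hle
    simp only [norm_mul, Real.norm_eq_abs, ← mul_assoc]
    rw [abs_of_nonneg (le_min zero_le_one (by positivity) : 0 ≤ min 1 (‖x‖ ^ 2 / ρ ^ 2)),
      abs_of_nonneg (le_min zero_le_one (by positivity) : 0 ≤ min 1 (‖x‖ ^ 2))]
    exact mul_le_mul_of_nonneg_right hle (abs_nonneg _)

theorem setLIntegral_le_ofReal_integral_min_one_sq_div_sq_mul (hg : 0 ≤ g) {t : ℝ} (ht : 0 < t)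
    (hint : Integrable (fun x ↦ min 1 (‖x‖ ^ 2 / t ^ 2) * g x) μ) :
    ∫⁻ x in {x | t ≤ ‖x‖}, ENNReal.ofReal (g x) ∂μ
      ≤ ENNReal.ofReal (∫ x, min 1 (‖x‖ ^ 2 / t ^ 2) * g x ∂μ) := by
  rw [ofReal_integral_eq_lintegral_ofReal hint
    (ae_of_all _ fun x ↦ mul_nonneg (le_min zero_le_one (by positivity)) (hg x))]
  refine le_of_eq_of_le (setLIntegral_congr_fun (measurableSet_le measurable_const measurable_norm)
    fun x hx ↦ ?_) (setLIntegral_le_lintegral _ _)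
  have : min 1 (‖x‖ ^ 2 / t ^ 2) = 1 :=
    min_eq_left ((one_le_div (by positivity)).2 (pow_le_pow_left₀ ht.le hx 2))
  rw [this, one_mul]

theorem setLIntegral_mul_ofReal_norm_le_of_tail_le {w : E → ℝ≥0∞} (hw : Measurable w)
    {r α K : ℝ} (hr₁ : r ≤ 1) (hα₀ : 0 ≤ α) (hα₁ : α < 1) (hK : 0 ≤ K)
    (htail : ∀ s ∈ Icc r 1, ∫⁻ x in {x | s ≤ ‖x‖}, w x ∂μ ≤ ENNReal.ofReal (K * s ^ (-α))) :
    ∫⁻ x in {x | r ≤ ‖x‖ ∧ ‖x‖ < 1}, w x * ENNReal.ofReal ‖x‖ ∂μ ≤ ENNReal.ofReal (K / (1 - α)) := by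
  set A := {x : E | r ≤ ‖x‖ ∧ ‖x‖ < 1}
  have layer : ∀ t ∈ Ioi (0:ℝ), ∫⁻ x in {x | t < ‖x‖}, w x ∂μ.restrict A
      ≤ (Iio 1).indicator (fun t ↦ ENNReal.ofReal (K * t ^ (-α))) t := by
    intro t ht
    rw [Measure.restrict_restrict (measurableSet_lt measurable_const measurable_norm)]
    by_cases ht₁ : t < 1
    · rw [indicator_of_mem (mem_Iio.2 ht₁)]
      calc _ ≤ ∫⁻ x in {x | max t r ≤ ‖x‖}, w x ∂μ :=
            lintegral_mono_set fun x hx ↦ max_le hx.1.le hx.2.1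
        _ ≤ ENNReal.ofReal (K * (max t r) ^ (-α)) :=
            htail _ ⟨le_max_right t r, max_le ht₁.le hr₁⟩
        _ ≤ _ := ENNReal.ofReal_le_ofReal <| mul_le_mul_of_nonneg_left
            (Real.rpow_le_rpow_of_nonpos ht (le_max_left t r) (neg_nonpos.2 hα₀)) hK
    · have : {x | t < ‖x‖} ∩ A = ∅ :=
        eq_empty_of_forall_notMem fun x hx ↦ ht₁ (hx.1.trans hx.2.2)
      simp [this]
  calc _ = ∫⁻ t in Ioi 0, ∫⁻ x in {x | t < ‖x‖}, w x ∂μ.restrict A :=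
        lintegral_mul_ofReal_eq_lintegral_setLIntegral_lt _ (fun x ↦ norm_nonneg x)
          measurable_norm hw
    _ ≤ ∫⁻ t in Ioi 0, (Iio 1).indicator (fun t ↦ ENNReal.ofReal (K * t ^ (-α))) t :=
        setLIntegral_mono' measurableSet_Ioi layer
    _ = ∫⁻ t in Ioo 0 1, ENNReal.ofReal K * ENNReal.ofReal (t ^ (-α)) := by
        rw [lintegral_indicator measurableSet_Iio, Measure.restrict_restrict measurableSet_Iio,
          Iio_inter_Ioi]
        exact lintegral_congr fun t ↦ ENNReal.ofReal_mul hK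
    _ = _ := by
        rw [lintegral_const_mul' _ _ ENNReal.ofReal_ne_top, lintegral_Ioo_zero_one_rpow_neg hα₁,
          ← ENNReal.ofReal_mul hK, mul_one_div]

theorem setIntegral_norm_mul_le_of_tail_le (hg₀ : 0 ≤ g) (hg : Measurable g)
    {r α K : ℝ} (hr₁ : r ≤ 1) (hα₀ : 0 ≤ α) (hα₁ : α < 1) (hK : 0 ≤ K)
    (htail : ∀ s ∈ Icc r 1, ∫⁻ x in {x | s ≤ ‖x‖}, ENNReal.ofReal (g x) ∂μ
      ≤ ENNReal.ofReal (K * s ^ (-α))) :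
    ∫ x in {x | r ≤ ‖x‖ ∧ ‖x‖ < 1}, ‖x‖ * g x ∂μ ≤ K / (1 - α) := by
  rw [integral_eq_lintegral_of_nonneg_ae (ae_of_all _ fun x ↦ mul_nonneg (norm_nonneg x) (hg₀ x))
    (measurable_norm.mul hg).aestronglyMeasurable]
  refine ENNReal.toReal_le_of_le_ofReal (div_nonneg hK (sub_nonneg.2 hα₁.le)) ?_
  calc _ = ∫⁻ x in {x | r ≤ ‖x‖ ∧ ‖x‖ < 1}, ENNReal.ofReal (g x) * ENNReal.ofReal ‖x‖ ∂μ :=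
        lintegral_congr fun x ↦ by rw [ENNReal.ofReal_mul (norm_nonneg x), mul_comm]
    _ ≤ _ := setLIntegral_mul_ofReal_norm_le_of_tail_le hg.ennreal_ofReal hr₁ hα₀ hα₁ hK htail

end

theorem le_mul_rpow_neg_of_weakScaling {h : ℝ → ℝ} {α C r s : ℝ}
    (hscal : ∀ l ∈ Ioc (0:ℝ) 1, ∀ ρ ∈ Ioc (0:ℝ) 1, h ρ ≤ C * l ^ α * h (l * ρ))
    (hr : 0 < r) (hrs : r ≤ s) (hs : s ≤ 1) :
    h s ≤ C * r ^ α * h r * s ^ (-α) := by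
  have hs₀ : 0 < s := hr.trans_le hrs
  have key := hscal (r / s) ⟨div_pos hr hs₀, (div_le_one hs₀).2 hrs⟩ s ⟨hs₀, hs⟩
  rw [div_mul_cancel₀ r hs₀.ne', Real.div_rpow hr.le hs₀.le, div_eq_mul_inv,
    ← Real.rpow_neg hs₀.le] at key
  linarith

theorem stmt2_general (d : ℕ) (ν : ℝ → ℝ)
    (hν_nonneg : ∀ s, 0 ≤ ν s)
    (hν_anti : AntitoneOn ν (Ici 0))
    (hν_int : Integrable (fun x : EuclideanSpace ℝ (Fin d) => min 1 (‖x‖ ^ 2) * ν ‖x‖))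
    (h : ℝ → ℝ)
    (hh : ∀ ρ > (0:ℝ), h ρ = ∫ x : EuclideanSpace ℝ (Fin d), min 1 (‖x‖ ^ 2 / ρ ^ 2) * ν ‖x‖)
    (αh Ch : ℝ) (hα : αh ∈ Ioo (0:ℝ) 1) (hCh : 1 ≤ Ch)
    (hscal : ∀ l ∈ Ioc (0:ℝ) 1, ∀ ρ ∈ Ioc (0:ℝ) 1, h ρ ≤ Ch * l ^ αh * h (l * ρ))
    (r : ℝ) (hr : r ∈ Ioc (0:ℝ) 1) :
    ∫ z in {z : EuclideanSpace ℝ (Fin d) | r ≤ ‖z‖ ∧ ‖z‖ < 1}, ‖z‖ * ν ‖z‖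
      ≤ 2 * Ch / (1 - αh) * (r ^ αh * h r) := by
  obtain ⟨hα₀, hα₁⟩ := hα
  obtain ⟨hr₀, hr₁⟩ := hr
  have hνm := hν_anti.measurable_comp_norm (E := EuclideanSpace ℝ (Fin d))
  have hhr : 0 ≤ h r := by
    rw [hh r hr₀]
    exact integral_nonneg fun x ↦ mul_nonneg (le_min zero_le_one (by positivity)) (hν_nonneg _)
  have hK : 0 ≤ Ch * r ^ αh * h r :=
    mul_nonneg (mul_nonneg (by linarith) (Real.rpow_nonneg hr₀.le _)) hhr
  have htail : ∀ s ∈ Icc r 1, ∫⁻ z in {z | s ≤ ‖z‖}, ENNReal.ofReal (ν ‖z‖)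
      ≤ ENNReal.ofReal (Ch * r ^ αh * h r * s ^ (-αh)) := fun s hs ↦ by
    have hs₀ : 0 < s := hr₀.trans_le hs.1
    refine (hh s hs₀ ▸ setLIntegral_le_ofReal_integral_min_one_sq_div_sq_mul
      (fun _ ↦ hν_nonneg _) hs₀ (hν_int.min_one_sq_div_sq_mul hνm.aestronglyMeasurable s)).trans ?_
    exact ENNReal.ofReal_le_ofReal (le_mul_rpow_neg_of_weakScaling hscal hr₀ hs.1 hs.2)
  calc _ ≤ Ch * r ^ αh * h r / (1 - αh) := setIntegral_norm_mul_le_of_tail_le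
        (fun _ ↦ hν_nonneg _) hνm hr₁ hα₀.le hα₁ hK htail
    _ ≤ 2 * Ch / (1 - αh) * (r ^ αh * h r) := by
      rw [show 2 * Ch / (1 - αh) * (r ^ αh * h r) = 2 * (Ch * r ^ αh * h r / (1 - αh)) by ring]
      linarith [div_nonneg hK (sub_nonneg.2 hα₁.le)]

/-- If `ν` is a non-increasing Lévy profile on `ℝ^d`,
`h(r) = ∫ (1 ∧ |x|²/r²) ν(|x|) dx` satisfies the weak scaling condition with
exponent `α_h ∈ (0,1)` and constant `C_h ≥ 1`, then for all `r ∈ (0,1]`,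
`∫_{r ≤ |z| < 1} |z| ν(|z|) dz ≤ (2 C_h/(1-α_h)) r^{α_h} h(r)`. -/
theorem stmt2 (d : ℕ) (hd : 0 < d) (ν : ℝ → ℝ)
    (hν_nonneg : ∀ s, 0 ≤ ν s)
    (hν_anti : AntitoneOn ν (Ici 0))
    (hν_int : Integrable (fun x : EuclideanSpace ℝ (Fin d) => min 1 (‖x‖ ^ 2) * ν ‖x‖))
    (h : ℝ → ℝ)
    (hh : ∀ ρ > (0:ℝ), h ρ = ∫ x : EuclideanSpace ℝ (Fin d), min 1 (‖x‖ ^ 2 / ρ ^ 2) * ν ‖x‖)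
    (αh Ch : ℝ) (hα : αh ∈ Ioo (0:ℝ) 1) (hCh : 1 ≤ Ch)
    (hscal : ∀ l ∈ Ioc (0:ℝ) 1, ∀ ρ ∈ Ioc (0:ℝ) 1, h ρ ≤ Ch * l ^ αh * h (l * ρ))
    (r : ℝ) (hr : r ∈ Ioc (0:ℝ) 1) :
    ∫ z in {z : EuclideanSpace ℝ (Fin d) | r ≤ ‖z‖ ∧ ‖z‖ < 1}, ‖z‖ * ν ‖z‖
      ≤ 2 * Ch / (1 - αh) * (r ^ αh * h r) :=
  stmt2_general d ν hν_nonneg hν_anti hν_int h hh αh Ch hα hCh hscal r hr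
end

section
/- Let $\varphi(r)=\frac{1}{\log(2+1/r)}$ for $r>0$ and $\nu(r)=r^{-d-1}\varphi(r)$ in dimension $d\ge 1$. Then the associated function $h(r)=\int_{\mathbb{R}^d}(1\wedge|x|^2/r^2)\nu(|x|)dx$ satisfies: for every $\alpha\in(0,1)$ there is $C\ge 1$ with $h(r)\le C\lambda^{\alpha}h(\lambda r)$ for all $\lambda,r\in(0,1]$, but there is no constant $C$ for which this holds with $\alpha=1$. -/
/-!
In polar coordinates `h = c_d · H` with `H r = ∫₀^∞ min(1, y²/r²) φ(y) y⁻² dy`, and the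
substitution `y ↦ λ y` gives `λ H(λ r) = ∫₀^∞ min(1, y²/r²) φ(λ y) y⁻² dy`. So the scaling
inequality reduces to the pointwise bound `φ(y) ≤ (1 + log(1/λ) / log 2) φ(λ y)`, which comes from
`log(2 + 1/(λ y)) ≤ log(2 + 1/y) + log(1/λ)`, together with `log(1/λ) ≤ λ^(α-1) / (1 - α)`.
For `α = 1` the bound would force `H 1 ≤ C λ H λ`, but `λ H λ → 0` as `λ → 0⁺` by dominated
convergence, since `φ(0⁺) = 0`, while `H 1 > 0`.
-/

open MeasureTheory Set

/-- `φ(r) = 1 / log(2 + 1/r)`. -/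
noncomputable def phi14 (r : ℝ) : ℝ := 1 / Real.log (2 + 1 / r)

/-- `h(r) = ∫ (1 ∧ |x|²/r²) ν(|x|) dx` with `ν(u) = u^{-d-1} φ(u)`. -/
noncomputable def h14 (d : ℕ) (r : ℝ) : ℝ :=
  ∫ x : EuclideanSpace ℝ (Fin d),
    min 1 (‖x‖ ^ 2 / r ^ 2) * (‖x‖ ^ (-(d : ℝ) - 1) * phi14 ‖x‖)

open Filter Topology

lemma log_two_le_log_two_add_inv {x : ℝ} (hx : 0 < x) : Real.log 2 ≤ Real.log (2 + 1 / x) :=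
  Real.log_le_log two_pos (by simpa using hx.le)

lemma phi14_pos {x : ℝ} (hx : 0 < x) : 0 < phi14 x :=
  one_div_pos.mpr ((Real.log_pos one_lt_two).trans_le (log_two_le_log_two_add_inv hx))

lemma phi14_le {x : ℝ} (hx : 0 < x) : phi14 x ≤ 1 / Real.log 2 :=
  one_div_le_one_div_of_le (Real.log_pos one_lt_two) (log_two_le_log_two_add_inv hx)

lemma measurable_phi14 : Measurable phi14 := by
  unfold phi14; fun_prop

lemma tendsto_phi14_nhdsGT_zero : Tendsto phi14 (𝓝[>] 0) (𝓝 0) := by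
  have h := (Real.tendsto_log_atTop.comp
    (tendsto_atTop_add_const_left _ 2 tendsto_inv_nhdsGT_zero)).inv_tendsto_atTop
  convert h using 1
  ext x
  simp [phi14]

lemma phi14_le_mul_phi14_mul {x l : ℝ} (hx : 0 < x) (hl : 0 < l) (hl1 : l ≤ 1) :
    phi14 x ≤ (1 + Real.log (1 / l) / Real.log 2) * phi14 (l * x) := by
  have hlog2 := Real.log_pos one_lt_two
  have hx2 := log_two_le_log_two_add_inv hx
  have hlx2 := log_two_le_log_two_add_inv (mul_pos hl hx)
  have hloginv : 0 ≤ Real.log (1 / l) := Real.log_nonneg (by rw [le_div_iff₀ hl]; linarith)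
  have hsplit : Real.log (2 + 1 / (l * x)) ≤ Real.log (2 + 1 / x) + Real.log (1 / l) := by
    rw [← Real.log_mul (by positivity) (by positivity)]
    refine Real.log_le_log (by positivity) ?_
    have : 2 ≤ 2 * (1 / l) := by rw [le_mul_iff_one_le_right two_pos, le_div_iff₀ hl]; linarith
    calc 2 + 1 / (l * x) = 2 + 1 / x * (1 / l) := by field_simp
      _ ≤ 2 * (1 / l) + 1 / x * (1 / l) := by linarith
      _ = _ := by ring
  unfold phi14
  rw [mul_one_div, div_le_div_iff₀ (by linarith) (by linarith), one_mul]
  calc Real.log (2 + 1 / (l * x)) ≤ Real.log (2 + 1 / x) + Real.log (1 / l) := hsplit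
    _ ≤ Real.log (2 + 1 / x) + Real.log (1 / l) / Real.log 2 * Real.log (2 + 1 / x) := by
      gcongr
      rw [div_mul_eq_mul_div, le_div_iff₀ hlog2]
      exact mul_le_mul_of_nonneg_left hx2 hloginv
    _ = _ := by ring

lemma one_add_log_inv_div_le_rpow {α l c : ℝ} (hα : α < 1) (hl : 0 < l) (hl1 : l ≤ 1)
    (hc : 0 < c) :
    1 + Real.log (1 / l) / c ≤ (1 + 1 / ((1 - α) * c)) * l ^ (α - 1) := by
  have hlpow : 1 ≤ l ^ (α - 1) := Real.one_le_rpow_of_pos_of_le_one_of_nonpos hl hl1 (by linarith)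
  have hlog : Real.log (1 / l) ≤ l ^ (α - 1) / (1 - α) := by
    have := Real.log_le_rpow_div (x := 1 / l) (by positivity) (sub_pos.mpr hα)
    rwa [one_div, Real.inv_rpow hl.le, ← Real.rpow_neg hl.le, neg_sub, ← one_div] at this
  calc 1 + Real.log (1 / l) / c ≤ l ^ (α - 1) + l ^ (α - 1) / (1 - α) / c := by gcongr
    _ = _ := by field_simp

noncomputable def truncKernel (r y : ℝ) : ℝ := min 1 (y ^ 2 / r ^ 2) / y ^ 2

lemma truncKernel_nonneg (r y : ℝ) : 0 ≤ truncKernel r y := by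
  unfold truncKernel; positivity

lemma truncKernel_mul_mul {l : ℝ} (hl : l ≠ 0) (r y : ℝ) :
    truncKernel (l * r) (l * y) = truncKernel r y / l ^ 2 := by
  unfold truncKernel
  rw [mul_pow, mul_pow, mul_div_mul_left _ _ (pow_ne_zero 2 hl), div_div, mul_comm]

lemma integrableOn_truncKernel {r : ℝ} (hr : 0 < r) : IntegrableOn (truncKernel r) (Ioi 0) := by
  have hmeas : Measurable (truncKernel r) := by unfold truncKernel; fun_prop
  rw [← Ioc_union_Ioi_eq_Ioi hr.le, integrableOn_union]
  constructor
  · refine Measure.integrableOn_of_bounded (M := 1 / r ^ 2) (by simp)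
      hmeas.aestronglyMeasurable ?_
    filter_upwards [ae_restrict_mem measurableSet_Ioc] with y hy
    rw [Real.norm_of_nonneg (truncKernel_nonneg r y)]
    calc truncKernel r y ≤ y ^ 2 / r ^ 2 / y ^ 2 := by
          unfold truncKernel; gcongr; exact min_le_right _ _
      _ = 1 / r ^ 2 := by field_simp [hy.1.ne']
  · refine (integrableOn_Ioi_rpow_of_lt (show (-2 : ℝ) < -1 by norm_num) hr).mono'
      hmeas.aestronglyMeasurable ?_
    filter_upwards [ae_restrict_mem measurableSet_Ioi] with y hy
    rw [Real.norm_of_nonneg (truncKernel_nonneg r y), Real.rpow_neg (hr.trans hy).le]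
    norm_cast
    calc truncKernel r y ≤ 1 / y ^ 2 := by unfold truncKernel; gcongr; exact min_le_left _ _
      _ = (y ^ 2)⁻¹ := one_div _

lemma integrableOn_truncKernel_mul_phi14_mul {r l : ℝ} (hr : 0 < r) (hl : 0 < l) :
    IntegrableOn (fun y => truncKernel r y * phi14 (l * y)) (Ioi 0) := by
  refine (integrableOn_truncKernel hr).mul_bdd (c := 1 / Real.log 2)
    (measurable_phi14.comp (measurable_const_mul l)).aestronglyMeasurable ?_
  filter_upwards [ae_restrict_mem measurableSet_Ioi] with y hy
  have hly : 0 < l * y := mul_pos hl hy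
  rw [Real.norm_of_nonneg (phi14_pos hly).le]
  exact phi14_le hly

noncomputable def radialH14 (r : ℝ) : ℝ := ∫ y in Ioi 0, truncKernel r y * phi14 y

lemma mul_radialH14_mul {l : ℝ} (hl : 0 < l) (r : ℝ) :
    l * radialH14 (l * r) = ∫ y in Ioi 0, truncKernel r y * phi14 (l * y) := by
  have h := integral_comp_mul_left_Ioi (fun y => truncKernel (l * r) y * phi14 y) 0 hl
  simp only [mul_zero, truncKernel_mul_mul hl.ne', smul_eq_mul, div_mul_eq_mul_div,
    integral_div] at h
  rw [radialH14]
  field_simp at h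
  exact h.symm

lemma radialH14_pos {r : ℝ} (hr : 0 < r) : 0 < radialH14 r := by
  have hint : IntegrableOn (fun y => truncKernel r y * phi14 y) (Ioi 0) := by
    simpa using integrableOn_truncKernel_mul_phi14_mul hr one_pos
  have hsupp : Function.support (fun y => truncKernel r y * phi14 y) ∩ Ioi 0 = Ioi 0 :=
    inter_eq_right.mpr fun y (hy : 0 < y) =>
      (mul_pos (by unfold truncKernel; positivity) (phi14_pos hy)).ne'
  rw [radialH14, setIntegral_pos_iff_support_of_nonneg_ae
    (by filter_upwards [ae_restrict_mem measurableSet_Ioi] with y hy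
      using mul_nonneg (truncKernel_nonneg r y) (phi14_pos hy).le) hint, hsupp]
  simp

lemma radialH14_le_of_le_mul {l M : ℝ} (hl : 0 < l) {r : ℝ} (hr : 0 < r)
    (hM : ∀ y, 0 < y → phi14 y ≤ M * phi14 (l * y)) :
    radialH14 r ≤ M * (l * radialH14 (l * r)) := by
  rw [mul_radialH14_mul hl, ← integral_const_mul]
  refine integral_mono_of_nonneg ?_
    ((integrableOn_truncKernel_mul_phi14_mul hr hl).const_mul M) ?_ <;>
  filter_upwards [ae_restrict_mem measurableSet_Ioi] with y hy
  · exact mul_nonneg (truncKernel_nonneg r y) (phi14_pos hy).le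
  · rw [mul_left_comm]
    exact mul_le_mul_of_nonneg_left (hM y hy) (truncKernel_nonneg r y)

lemma tendsto_mul_radialH14_mul {r : ℝ} (hr : 0 < r) :
    Tendsto (fun l => l * radialH14 (l * r)) (𝓝[>] 0) (𝓝 0) := by
  have hpos : ∀ᶠ l in 𝓝[>] (0 : ℝ), 0 < l := self_mem_nhdsWithin
  have hlim : ∀ y : ℝ, 0 < y →
      Tendsto (fun l => truncKernel r y * phi14 (l * y)) (𝓝[>] 0) (𝓝 0) := by
    intro y hy
    have hly : Tendsto (fun l : ℝ => l * y) (𝓝[>] 0) (𝓝[>] 0) := by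
      refine tendsto_nhdsWithin_of_tendsto_nhds_of_eventually_within _ ?_ ?_
      · simpa using ((continuous_mul_const y).tendsto' 0 0 (zero_mul y)).mono_left
          nhdsWithin_le_nhds
      · filter_upwards [hpos] with l hl using mul_pos hl hy
    simpa using (tendsto_phi14_nhdsGT_zero.comp hly).const_mul (truncKernel r y)
  have h := tendsto_integral_filter_of_dominated_convergence (μ := volume.restrict (Ioi 0))
    (fun y => truncKernel r y * (1 / Real.log 2))
    (by filter_upwards [hpos] with l hl
        using (integrableOn_truncKernel_mul_phi14_mul hr hl).aestronglyMeasurable)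
    (by filter_upwards [hpos] with l hl
        filter_upwards [ae_restrict_mem measurableSet_Ioi] with y (hy : 0 < y)
        have hly := mul_pos hl hy
        rw [Real.norm_of_nonneg (mul_nonneg (truncKernel_nonneg r y) (phi14_pos hly).le)]
        exact mul_le_mul_of_nonneg_left (phi14_le hly) (truncKernel_nonneg r y))
    ((integrableOn_truncKernel hr).mul_const _)
    ((ae_restrict_iff' measurableSet_Ioi).mpr (ae_of_all _ hlim))
  rw [integral_zero] at h
  refine h.congr' ?_
  filter_upwards [hpos] with l hl using (mul_radialH14_mul hl r).symm

lemma radialH14_le_mul_rpow_mul {α l r : ℝ} (hα : α < 1) (hl : 0 < l) (hl1 : l ≤ 1)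
    (hr : 0 < r) :
    radialH14 r ≤ (1 + 1 / ((1 - α) * Real.log 2)) * l ^ α * radialH14 (l * r) := by
  have key := radialH14_le_of_le_mul hl hr fun y hy =>
    (phi14_le_mul_phi14_mul hy hl hl1).trans <| mul_le_mul_of_nonneg_right
      (one_add_log_inv_div_le_rpow hα hl hl1 (Real.log_pos one_lt_two))
      (phi14_pos (mul_pos hl hy)).le
  rwa [mul_assoc _ (l ^ (α - 1)), ← mul_assoc (l ^ (α - 1)), ← Real.rpow_add_one hl.ne',
    sub_add_cancel, ← mul_assoc] at key

lemma h14_eq_mul_radialH14 {d : ℕ} (hd : 1 ≤ d) :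
    ∃ c > 0, ∀ r, h14 d r = c * radialH14 r := by
  have : Nontrivial (EuclideanSpace ℝ (Fin d)) :=
    Module.nontrivial_of_finrank_pos (R := ℝ) (by rw [finrank_euclideanSpace_fin]; exact hd)
  refine ⟨d * volume.real (Metric.ball (0 : EuclideanSpace ℝ (Fin d)) 1),
    mul_pos (by exact_mod_cast hd)
      (ENNReal.toReal_pos (Metric.measure_ball_pos volume _ one_pos).ne' measure_ball_lt_top.ne),
    fun r => ?_⟩
  rw [h14, integral_fun_norm_addHaar volume
    (fun y => min 1 (y ^ 2 / r ^ 2) * (y ^ (-(d : ℝ) - 1) * phi14 y)),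
    finrank_euclideanSpace_fin, nsmul_eq_mul, smul_eq_mul, mul_assoc, radialH14]
  congr 2
  refine setIntegral_congr_fun measurableSet_Ioi fun y (hy : 0 < y) => ?_
  have hpow : y ^ (d - 1) * y ^ (-(d : ℝ) - 1) = (y ^ 2)⁻¹ := by
    rw [← Real.rpow_natCast, Nat.cast_sub hd, Nat.cast_one, ← Real.rpow_add hy,
      show (d : ℝ) - 1 + (-d - 1) = -2 by ring, Real.rpow_neg hy.le]
    norm_num
  simp only [smul_eq_mul, truncKernel]
  rw [div_eq_mul_inv _ (y ^ 2), ← hpow]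
  ring

/-- for `ν(r) = r^{-d-1}/log(2+1/r)`, the function `h` satisfies the weak
scaling condition with any exponent `α ∈ (0,1)`, but not with exponent `1`. -/
theorem stmt14 (d : ℕ) (hd : 1 ≤ d) :
    (∀ α ∈ Ioo (0:ℝ) 1, ∃ C : ℝ, 1 ≤ C ∧ ∀ l ∈ Ioc (0:ℝ) 1, ∀ r ∈ Ioc (0:ℝ) 1,
        h14 d r ≤ C * l ^ α * h14 d (l * r)) ∧
    ¬ (∃ C : ℝ, 1 ≤ C ∧ ∀ l ∈ Ioc (0:ℝ) 1, ∀ r ∈ Ioc (0:ℝ) 1,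
        h14 d r ≤ C * l ^ (1:ℝ) * h14 d (l * r)) := by
  obtain ⟨c, hc, hh⟩ := h14_eq_mul_radialH14 hd
  constructor
  · intro α hα
    have : 0 < (1 - α) * Real.log 2 := mul_pos (sub_pos.mpr hα.2) (Real.log_pos one_lt_two)
    refine ⟨1 + 1 / ((1 - α) * Real.log 2), le_add_of_nonneg_right (one_div_pos.mpr this).le,
      fun l hl r hr => ?_⟩
    rw [hh, hh, mul_left_comm]
    exact mul_le_mul_of_nonneg_left (radialH14_le_mul_rpow_mul hα.2 hl.1 hl.2 hr.1) hc.le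
  · rintro ⟨C, -, hC⟩
    have hbound : ∀ᶠ l in 𝓝[>] 0, radialH14 1 ≤ C * (l * radialH14 (l * 1)) := by
      filter_upwards [Ioo_mem_nhdsGT one_pos] with l hl
      have h := hC l ⟨hl.1, hl.2.le⟩ 1 ⟨one_pos, le_rfl⟩
      rw [hh, hh, Real.rpow_one] at h
      exact le_of_mul_le_mul_left (by linarith) hc
    have h := ge_of_tendsto ((tendsto_mul_radialH14_mul one_pos).const_mul C) hbound
    rw [mul_zero] at h
    exact (radialH14_pos one_pos).not_ge h
end
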